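/- If β > 0 and α ≠ 0, then for all integers n ≥ −1 and all reals k, δ: I_n(k; α, β, δ) = −(e^{αk}/α)·Σ_{i=0}^{n} (β/α)^{n−i}·Hh_i(βk − δ) + (β/α)^{n+1}·(√(2π)/β)·e^{αδ/β + α²/(2β²)}·Φ(−βk + δ + α/β), where the sum is empty when n = −1 and Φ is the standard normal CDF. -/

import Mathlib

open MeasureTheory ProbabilityTheory

/-- The standard normal cumulative distribution function `Φ`. -/
noncomputable def stdNormalCDF (x : ℝ) : ℝ := ((gaussianReal 0 1) (Set.Iic x)).toReal

/-- The `Hh` functions: `Hh₋₁(x) = e^{−x²/2}` and, for `n ≥ 0`,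
`Hh_n(x) = (1/n!)·∫_x^∞ (t − x)^n · e^{−t²/2} dt`. -/
noncomputable def Hh (n : ℤ) (x : ℝ) : ℝ :=
  if n = -1 then Real.exp (-x ^ 2 / 2)
  else if 0 ≤ n then
    (1 / (Nat.factorial n.toNat : ℝ))
      * ∫ t in Set.Ioi x, (t - x) ^ n.toNat * Real.exp (-t ^ 2 / 2)
  else 0

/-- `I_n(k; α, β, δ) = ∫_k^∞ e^{αx}·Hh_n(βx − δ) dx`. -/
noncomputable def In (n : ℤ) (k α β δ : ℝ) : ℝ :=
  ∫ x in Set.Ioi k, Real.exp (α * x) * Hh n (β * x - δ)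

/-!
For any continuous `f` with integrable moments, the upper partial moments
`∫_y^∞ (t - y)^m f(t) dt` satisfy `d/dy = -m · (moment of order m - 1)`, by induction on `m`
for all such `f` at once, using `(t - y)^(m+1) f = (t - y)^m (t f) - y (t - y)^m f`.
For the Gaussian this gives `Hh_n' = -Hh_{n-1}`. Consequently
`G_{m+1}(x) = e^{αx}/α · Hh_m(βx - δ) + (β/α) G_m(x)`, started from
`G_0(x) = -(e^{αδ/β + α²/(2β²)}/β) Hh_0(βx - δ - α/β)` (completing the square), is a primitive of
`e^{αx} Hh_{m-1}(βx - δ)`. The Gaussian decay `Hh_n(y) ≤ Hh_n(0) e^{-y²/2}` makes `G_m` vanish at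
`+∞`, so, the integrand being nonnegative, the improper integral converges and
`I_{m-1}(k) = -G_m(k)`. Unrolling the recursion and `Hh_0(y) = √(2π) Φ(-y)` give the closed form.
-/

open Real Filter Set Topology

noncomputable def upperPartialMoment (f : ℝ → ℝ) (m : ℕ) (y : ℝ) : ℝ :=
  ∫ t in Ioi y, (t - y) ^ m * f t

theorem hasDerivAt_integral_Ioi {f : ℝ → ℝ} (hf : Integrable f) (hc : Continuous f) (x : ℝ) :
    HasDerivAt (fun y => ∫ t in Ioi y, f t) (-f x) x := by
  have hsplit : (fun y => ∫ t in Ioi y, f t) = fun y => (∫ t in Ioi 0, f t) - ∫ t in 0..y, f t :=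
    funext fun y => eq_sub_of_add_eq'
      (intervalIntegral.integral_interval_add_Ioi hf.integrableOn hf.integrableOn)
  rw [hsplit]
  exact (intervalIntegral.integral_hasDerivAt_right hf.intervalIntegrable
    (hc.stronglyMeasurableAtFilter _ _) hc.continuousAt).const_sub _

section Moments

variable {f : ℝ → ℝ}

theorem integrable_sub_pow_mul (hmom : ∀ j : ℕ, Integrable fun t => t ^ j * f t) (c : ℝ) (m : ℕ) :
    Integrable fun t => (t - c) ^ m * f t := by
  have hexpand : (fun t => (t - c) ^ m * f t) =
      fun t => ∑ j ∈ Finset.range (m + 1), ((-c) ^ (m - j) * m.choose j) * (t ^ j * f t) := by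
    funext t
    rw [sub_eq_add_neg, add_pow, Finset.sum_mul]
    exact Finset.sum_congr rfl fun j _ => by ring
  rw [hexpand]
  exact integrable_finsetSum _ fun j _ => (hmom j).const_mul _

theorem integrable_pow_mul_id_mul (hmom : ∀ j : ℕ, Integrable fun t => t ^ j * f t) (j : ℕ) :
    Integrable fun t => t ^ j * (t * f t) := by
  simpa only [pow_succ, mul_assoc] using hmom (j + 1)

namespace upperPartialMoment

theorem succ (hmom : ∀ j : ℕ, Integrable fun t => t ^ j * f t) (m : ℕ) (y : ℝ) :
    upperPartialMoment f (m + 1) y =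
      upperPartialMoment (fun t => t * f t) m y - y * upperPartialMoment f m y := by
  rw [upperPartialMoment, upperPartialMoment, upperPartialMoment, ← integral_const_mul,
    ← integral_sub (integrable_sub_pow_mul (integrable_pow_mul_id_mul hmom) y m).integrableOn
      ((integrable_sub_pow_mul hmom y m).const_mul y).integrableOn]
  congr 1 with t
  ring

theorem hasDerivAt_zero (hf : Continuous f) (hmom : ∀ j : ℕ, Integrable fun t => t ^ j * f t)
    (x : ℝ) : HasDerivAt (upperPartialMoment f 0) (-f x) x := by
  have hzero : upperPartialMoment f 0 = fun y => ∫ t in Ioi y, f t := by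
    funext y
    simp only [upperPartialMoment, pow_zero, one_mul]
  rw [hzero]
  exact hasDerivAt_integral_Ioi (by simpa using hmom 0) hf x

theorem hasDerivAt_succ (hf : Continuous f) (hmom : ∀ j : ℕ, Integrable fun t => t ^ j * f t)
    (m : ℕ) (x : ℝ) :
    HasDerivAt (upperPartialMoment f (m + 1)) (-(m + 1) * upperPartialMoment f m x) x := by
  induction m generalizing f with
  | zero =>
    rw [funext (succ hmom 0)]
    refine ((hasDerivAt_zero (f := fun t => t * f t) (by fun_prop)
      (integrable_pow_mul_id_mul hmom) x).sub ((hasDerivAt_id x).mul (hasDerivAt_zero hf hmom x))).congr_deriv ?_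
    simp only [upperPartialMoment, pow_zero, one_mul, id]
    ring
  | succ m ih =>
    rw [funext (succ hmom (m + 1))]
    refine ((ih (f := fun t => t * f t) (by fun_prop) (integrable_pow_mul_id_mul hmom)).sub
      ((hasDerivAt_id x).mul (ih hf hmom))).congr_deriv ?_
    rw [succ hmom m x]
    simp only [id]
    push_cast
    ring

end upperPartialMoment

end Moments

theorem integrable_pow_mul_exp_neg_sq_div_two (j : ℕ) :
    Integrable fun t : ℝ => t ^ j * exp (-t ^ 2 / 2) := by
  have h := integrable_rpow_mul_exp_neg_mul_sq (b := 1 / 2) (by norm_num) (s := j)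
    (by linarith [j.cast_nonneg (α := ℝ)])
  refine h.congr (Eventually.of_forall fun t => ?_)
  simp only [rpow_natCast]
  ring_nf

theorem Hh_neg_one (x : ℝ) : Hh (-1) x = exp (-x ^ 2 / 2) := if_pos rfl

theorem Hh_natCast (m : ℕ) (x : ℝ) :
    Hh m x = upperPartialMoment (fun t => exp (-t ^ 2 / 2)) m x / m.factorial := by
  simp [Hh, upperPartialMoment, div_eq_inv_mul]

theorem hasDerivAt_Hh (n : ℕ) (x : ℝ) : HasDerivAt (Hh n) (-Hh (n - 1) x) x := by
  have hc : Continuous fun t : ℝ => exp (-t ^ 2 / 2) := by fun_prop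
  have hHh : Hh n = fun y => upperPartialMoment (fun t => exp (-t ^ 2 / 2)) n y / n.factorial :=
    funext (Hh_natCast n)
  rw [hHh]
  cases n with
  | zero =>
    simpa [Hh_neg_one] using
      (upperPartialMoment.hasDerivAt_zero hc integrable_pow_mul_exp_neg_sq_div_two x).div_const
        (Nat.factorial 0 : ℝ)
  | succ m =>
    refine ((upperPartialMoment.hasDerivAt_succ hc integrable_pow_mul_exp_neg_sq_div_two m
      x).div_const _).congr_deriv ?_
    rw [Nat.cast_succ, add_sub_cancel_right, Hh_natCast, Nat.factorial_succ]
    push_cast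
    field_simp

theorem Hh_nonneg (n : ℤ) (x : ℝ) : 0 ≤ Hh n x := by
  unfold Hh
  split_ifs
  · positivity
  · refine mul_nonneg (by positivity) (setIntegral_nonneg measurableSet_Ioi fun t ht => ?_)
    have : 0 ≤ t - x := sub_nonneg.2 (le_of_lt ht)
    positivity
  · exact le_rfl

theorem setIntegral_Ioi_comp_sub_right (g : ℝ → ℝ) (y : ℝ) :
    ∫ t in Ioi y, g (t - y) = ∫ s in Ioi 0, g s := by
  have h := (measurePreserving_sub_right volume y).setIntegral_preimage_emb
    (measurableEmbedding_subRight y) g (Ioi 0)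
  simpa [preimage_sub_const_Ioi] using h

/-- For `t ≥ y ≥ 0` we have `t² ≥ (t - y)² + y²`, so `Hh_n` inherits the Gaussian decay. -/
theorem Hh_le_Hh_zero_mul_exp (n : ℤ) {y : ℝ} (hy : 0 ≤ y) :
    Hh n y ≤ Hh n 0 * exp (-y ^ 2 / 2) := by
  rcases lt_trichotomy n (-1) with hn | rfl | hn
  · simp [Hh, hn.ne, show ¬ 0 ≤ n by omega]
  · simp [Hh_neg_one]
  lift n to ℕ using by omega
  rw [Hh_natCast, Hh_natCast, div_mul_eq_mul_div, upperPartialMoment, upperPartialMoment,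
    ← integral_mul_const, ← setIntegral_Ioi_comp_sub_right _ y]
  gcongr ?_ / _
  have hint := integrable_sub_pow_mul integrable_pow_mul_exp_neg_sq_div_two
  refine setIntegral_mono_on (hint y n).integrableOn
    (((hint 0 n).mul_const _).comp_sub_right y).integrableOn measurableSet_Ioi fun t ht => ?_
  have hty : 0 ≤ t - y := sub_nonneg.2 (le_of_lt ht)
  have hexp : exp (-t ^ 2 / 2) ≤ exp (-(t - y) ^ 2 / 2) * exp (-y ^ 2 / 2) := by
    rw [← exp_add]
    exact exp_le_exp.2 (by nlinarith)
  simpa only [sub_zero, mul_assoc] using mul_le_mul_of_nonneg_left hexp (pow_nonneg hty n)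

theorem tendsto_exp_mul_Hh (a : ℝ) {b : ℝ} (hb : 0 < b) (d : ℝ) (n : ℤ) :
    Tendsto (fun x => exp (a * x) * Hh n (b * x - d)) atTop (𝓝 0) := by
  have hquad : Tendsto (fun x => a * x - (b * x - d) ^ 2 / 2) atTop atBot := by
    have hlin : Tendsto (fun x => (a + b * d) + (-b ^ 2 / 2) * x) atTop atBot :=
      tendsto_atBot_add_const_left _ _ (tendsto_id.const_mul_atTop_of_neg (by nlinarith))
    refine (tendsto_atBot_add_const_right _ (-d ^ 2 / 2)
      (tendsto_id.atTop_mul_atBot₀ hlin)).congr fun x => ?_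
    simp only [id]
    ring
  have hbound : Tendsto (fun x => Hh n 0 * exp (a * x - (b * x - d) ^ 2 / 2)) atTop (𝓝 0) := by
    simpa using (tendsto_exp_atBot.comp hquad).const_mul (Hh n 0)
  refine squeeze_zero' (Eventually.of_forall fun x => mul_nonneg (exp_pos _).le (Hh_nonneg n _))
    ?_ hbound
  filter_upwards [eventually_ge_atTop (d / b)] with x hx
  have hx' : 0 ≤ b * x - d := by rw [div_le_iff₀ hb] at hx; linarith
  calc exp (a * x) * Hh n (b * x - d)
      ≤ exp (a * x) * (Hh n 0 * exp (-(b * x - d) ^ 2 / 2)) := by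
        gcongr
        exact Hh_le_Hh_zero_mul_exp n hx'
    _ = Hh n 0 * exp (a * x - (b * x - d) ^ 2 / 2) := by
        rw [mul_left_comm, ← exp_add]
        ring_nf

theorem Hh_zero_eq_sqrt_mul_stdNormalCDF (y : ℝ) :
    Hh 0 y = sqrt (2 * π) * stdNormalCDF (-y) := by
  have hpdf : ∀ t, gaussianPDFReal 0 1 t = (sqrt (2 * π))⁻¹ * exp (-t ^ 2 / 2) := fun t => by
    simp [gaussianPDFReal]
  rw [stdNormalCDF, gaussianReal_apply_eq_integral 0 one_ne_zero, ENNReal.toReal_ofReal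
    (setIntegral_nonneg measurableSet_Iic fun t _ => gaussianPDFReal_nonneg 0 1 t)]
  simp_rw [hpdf]
  rw [integral_const_mul, mul_inv_cancel_left₀ (by positivity), ← integral_comp_neg_Ioi]
  simpa [upperPartialMoment] using Hh_natCast 0 y

noncomputable def expHhPrimitive (α β δ : ℝ) : ℕ → ℝ → ℝ
  | 0, x => -(exp (α * δ / β + α ^ 2 / (2 * β ^ 2)) / β) * Hh 0 (β * x - (δ + α / β))
  | m + 1, x => exp (α * x) / α * Hh m (β * x - δ) + β / α * expHhPrimitive α β δ m x

section Primitive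

variable {α β δ : ℝ}

theorem hasDerivAt_expHhPrimitive (hα : α ≠ 0) (hβ : β ≠ 0) (m : ℕ) (x : ℝ) :
    HasDerivAt (expHhPrimitive α β δ m) (exp (α * x) * Hh (m - 1) (β * x - δ)) x := by
  have hlin : ∀ c, HasDerivAt (fun y => β * y - c) β x := fun c => by
    simpa using ((hasDerivAt_id x).const_mul β).sub_const c
  have hHh : ∀ (i : ℕ) c, HasDerivAt (fun y => Hh i (β * y - c)) (-Hh (i - 1) (β * x - c) * β) x :=
    fun i c => (hasDerivAt_Hh i _).comp x (hlin c)
  cases m with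
  | zero =>
    refine ((hHh 0 _).const_mul _).congr_deriv ?_
    have hsq : α * δ / β + α ^ 2 / (2 * β ^ 2) + -(β * x - (δ + α / β)) ^ 2 / 2 =
        α * x + -(β * x - δ) ^ 2 / 2 := by
      field_simp
      ring
    simp only [Nat.cast_zero, zero_sub, Hh_neg_one]
    rw [← exp_add (α * x), ← hsq, exp_add (α * δ / β + α ^ 2 / (2 * β ^ 2))]
    field_simp
  | succ m =>
    have hexp : HasDerivAt (fun y => exp (α * y) / α) (exp (α * x)) x := by
      simpa [mul_div_assoc, hα] using (((hasDerivAt_id x).const_mul α).exp).div_const α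
    refine ((hexp.mul (hHh m δ)).add
      ((hasDerivAt_expHhPrimitive hα hβ m x).const_mul (β / α))).congr_deriv ?_
    push_cast
    simp only [add_sub_cancel_right]
    field_simp
    ring

theorem tendsto_expHhPrimitive (hβ : 0 < β) (m : ℕ) :
    Tendsto (expHhPrimitive α β δ m) atTop (𝓝 0) := by
  induction m with
  | zero =>
    have h := (tendsto_exp_mul_Hh 0 hβ (δ + α / β) 0).const_mul
      (-(exp (α * δ / β + α ^ 2 / (2 * β ^ 2)) / β))
    simp only [zero_mul, exp_zero, one_mul, mul_zero] at h
    exact h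
  | succ m ih =>
    have h := ((tendsto_exp_mul_Hh α hβ δ m).div_const α).add (ih.const_mul (β / α))
    rw [zero_div, mul_zero, add_zero] at h
    exact h.congr fun x => by simp only [expHhPrimitive]; ring

theorem expHhPrimitive_eq (m : ℕ) (x : ℝ) :
    expHhPrimitive α β δ m x =
      exp (α * x) / α * ∑ i ∈ Finset.range m, (β / α) ^ ((m : ℤ) - 1 - i) * Hh i (β * x - δ)
        + (β / α) ^ m * expHhPrimitive α β δ 0 x := by
  induction m with
  | zero => simp
  | succ m ih =>
    have hsum : ∑ i ∈ Finset.range m, (β / α) ^ (((m + 1 : ℕ) : ℤ) - 1 - i) * Hh i (β * x - δ) =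
        β / α * ∑ i ∈ Finset.range m, (β / α) ^ ((m : ℤ) - 1 - i) * Hh i (β * x - δ) := by
      rw [Finset.mul_sum]
      refine Finset.sum_congr rfl fun i hi => ?_
      have hi : i < m := Finset.mem_range.1 hi
      rw [show ((m + 1 : ℕ) : ℤ) - 1 - i = 1 + ((m : ℤ) - 1 - i) by push_cast; ring,
        zpow_add' (Or.inr (Or.inl (by omega))), zpow_one, mul_assoc]
    rw [expHhPrimitive.eq_2, ih, Finset.sum_range_succ, hsum]
    simp only [Nat.cast_succ, add_sub_cancel_right, sub_self, zpow_zero, pow_succ]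
    ring

end Primitive

/-- If `β > 0` and `α ≠ 0`, then for all integers `n ≥ −1` and reals
`k, δ`:
`I_n(k; α, β, δ) = −(e^{αk}/α)·Σ_{i=0}^{n} (β/α)^{n−i}·Hh_i(βk − δ)
  + (β/α)^{n+1}·(√(2π)/β)·e^{αδ/β + α²/(2β²)}·Φ(−βk + δ + α/β)`
(the sum being empty when `n = −1`). -/
theorem In_closed_form (α β : ℝ) (hβ : 0 < β) (hα : α ≠ 0)
    (n : ℤ) (hn : -1 ≤ n) (k δ : ℝ) :
    In n k α β δ
      = -(Real.exp (α * k) / α)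
          * (∑ i ∈ Finset.range (n + 1).toNat, (β / α) ^ (n - (i : ℤ)) * Hh i (β * k - δ))
        + (β / α) ^ (n + 1) * (Real.sqrt (2 * Real.pi) / β)
            * Real.exp (α * δ / β + α ^ 2 / (2 * β ^ 2))
            * stdNormalCDF (-β * k + δ + α / β) := by
  obtain ⟨m, rfl⟩ : ∃ m : ℕ, n = m - 1 := ⟨(n + 1).toNat, by omega⟩
  have hderiv := hasDerivAt_expHhPrimitive (δ := δ) hα hβ.ne' m
  have hI : In (m - 1) k α β δ = 0 - expHhPrimitive α β δ m k :=
    integral_Ioi_of_hasDerivAt_of_nonneg (hderiv k).continuousAt.continuousWithinAt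
      (fun x _ => hderiv x) (fun x _ => mul_nonneg (exp_pos _).le (Hh_nonneg _ _))
      (tendsto_expHhPrimitive hβ m)
  rw [hI, expHhPrimitive_eq, expHhPrimitive, Hh_zero_eq_sqrt_mul_stdNormalCDF, sub_add_cancel,
    zpow_natCast, Int.toNat_natCast,
    show -(β * k - (δ + α / β)) = -β * k + δ + α / β by ring]
  ring
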